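/- Let (M, Σ_M, μ_M) be a measure space, (N, d_N) a complete metric space, and h : M → N strongly measurable. Let c : [a,b] → L^1_h(M,N) be a curve with respect to the metric D_1 that is right-continuous with left limits on [a,b), left-continuous at b, and satisfies Var_{D_1}(c;[a,b]) < ∞. Then there exists a Borel measurable ĉ : [a,b]×M → N with separable range such that: (a) for EVERY t ∈ [a,b], ĉ(t,·) is a representative of c(t); (b) for μ_M-a.e. x ∈ M, the curve t ↦ ĉ(t,x) is right-continuous with left limits on [a,b), left-continuous at b, and has Var_N(ĉ(·,x);[a,b]) < ∞; and (c) for all a ≤ s < t ≤ b, Var_{D_1}(c;(s,t)) = ∫_M Var_N(ĉ(·,x);(s,t)) dμ_M(x). -/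

import Mathlib

set_option linter.unusedSectionVars false

open MeasureTheory ENNReal Set Filter Topology TopologicalSpace

noncomputable section

namespace NLS

variable {α : Type*} [MeasurableSpace α] {N : Type*} [MetricSpace N]
  [MeasurableSpace N] [BorelSpace N]

/-- "Strongly measurable": Borel measurable with separable range. -/
def SM (f : α → N) : Prop :=
  Measurable f ∧ TopologicalSpace.IsSeparable (Set.range f)

theorem SM.aesm {f : α → N} (hf : SM f) (μ : Measure α) :
    AEStronglyMeasurable f μ :=
  (stronglyMeasurable_iff_measurable_separable.2 ⟨hf.1, hf.2⟩).aestronglyMeasurable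

/-- The `L^p` (extended) distance between two maps with values in a metric space;
for `p < ∞` it is `(∫ d(f x, g x)^p dμ)^{1/p}` and for `p = ∞` the essential supremum
of `x ↦ d(f x, g x)`. -/
def Dp (μ : Measure α) (p : ℝ≥0∞) (f g : α → N) : ℝ≥0∞ :=
  eLpNorm (fun x => dist (f x) (g x)) p μ

theorem Dp_self (μ : Measure α) (p : ℝ≥0∞) (f : α → N) : Dp μ p f f = 0 := by
  unfold Dp
  simp only [dist_self]
  exact eLpNorm_zero'

theorem Dp_comm (μ : Measure α) (p : ℝ≥0∞) (f g : α → N) : Dp μ p f g = Dp μ p g f := by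
  unfold Dp
  simp only [dist_comm]

theorem Dp_triangle {μ : Measure α} {p : ℝ≥0∞} (hp : 1 ≤ p) {f g k : α → N}
    (hf : AEStronglyMeasurable f μ) (hg : AEStronglyMeasurable g μ)
    (hk : AEStronglyMeasurable k μ) :
    Dp μ p f k ≤ Dp μ p f g + Dp μ p g k := by
  have h1 : Dp μ p f k ≤
      eLpNorm ((fun x => dist (f x) (g x)) + fun x => dist (g x) (k x)) p μ := by
    refine eLpNorm_mono fun x => ?_
    simp only [Pi.add_apply, Real.norm_eq_abs]
    rw [abs_of_nonneg dist_nonneg]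
    exact (dist_triangle (f x) (g x) (k x)).trans (le_abs_self _)
  exact h1.trans (eLpNorm_add_le (hf.dist hg) (hg.dist hk) hp)

/-- The nonlinear Lebesgue space `L^p_h(α, N)` with base map `h`, presented by
representatives: Borel measurable, separably valued maps at finite `D_p`-distance
from `h`.  Two representatives at `D_p`-distance `0` (equivalently, `μ`-a.e. equal)
represent the same element of the quotient nonlinear Lebesgue space; accordingly the
canonical structure below is a pseudometric space whose metric (separation) quotient is
the actual nonlinear Lebesgue space.  All topological and Borel-measurability notions for
the quotient correspond exactly to those of this pseudometric space. -/
def NLp (μ : Measure α) (h : α → N) (_hh : SM h) (p : ℝ≥0∞) : Type _ :=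
  {f : α → N // SM f ∧ Dp μ p f h ≠ ∞}

namespace NLp

variable {μ : Measure α} {h : α → N} {hh : SM h} {p : ℝ≥0∞}

def pem (μ : Measure α) (h : α → N) (hh : SM h) (p : ℝ≥0∞) (hp : 1 ≤ p) :
    PseudoEMetricSpace (NLp μ h hh p) where
  edist f g := Dp μ p f.1 g.1
  edist_self f := Dp_self μ p f.1
  edist_comm f g := Dp_comm μ p f.1 g.1
  edist_triangle f g k := Dp_triangle hp (f.2.1.aesm μ) (g.2.1.aesm μ) (k.2.1.aesm μ)

theorem dp_ne_top (hp : 1 ≤ p) (f g : NLp μ h hh p) : Dp μ p f.1 g.1 ≠ ∞ := by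
  have htri := Dp_triangle hp (f.2.1.aesm μ) (hh.aesm μ) (g.2.1.aesm μ)
  have h2 : Dp μ p h g.1 ≠ ∞ := by rw [Dp_comm]; exact g.2.2
  exact ne_top_of_le_ne_top (ENNReal.add_ne_top.2 ⟨f.2.2, h2⟩) htri

/-- The `D_p` pseudometric on the nonlinear Lebesgue space. -/
instance [hp : Fact (1 ≤ p)] : PseudoMetricSpace (NLp μ h hh p) :=
  @PseudoEMetricSpace.toPseudoMetricSpace _ (pem μ h hh p hp.out)
    (fun f g => dp_ne_top hp.out f g)

instance [Fact (1 ≤ p)] : MeasurableSpace (NLp μ h hh p) := borel _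
instance [Fact (1 ≤ p)] : BorelSpace (NLp μ h hh p) := ⟨rfl⟩

theorem edist_def [Fact (1 ≤ p)] (f g : NLp μ h hh p) :
    edist f g = Dp μ p f.1 g.1 := rfl

theorem dist_def [Fact (1 ≤ p)] (f g : NLp μ h hh p) :
    dist f g = (Dp μ p f.1 g.1).toReal := rfl

end NLp

/-- Absolutely continuous curves: `c ∈ AC^p([a,b], X)`. -/
def MemACp {X : Type*} [PseudoMetricSpace X] (p : ℝ≥0∞) (a b : ℝ) (c : ℝ → X) : Prop :=
  ∃ m : ℝ → ℝ, MemLp m p (volume.restrict (Set.Icc a b)) ∧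
    ∀ s t : ℝ, a ≤ s → s ≤ t → t ≤ b → dist (c s) (c t) ≤ ∫ r in s..t, m r

/-- The metric derivative of a curve at `t` (limit of difference quotients within `[a,b]`). -/
def mder {X : Type*} [PseudoMetricSpace X] (a b : ℝ) (c : ℝ → X) (t : ℝ) : ℝ :=
  limUnder (𝓝[Set.Icc a b \ {t}] t) fun s => dist (c s) (c t) / |s - t|

instance : Fact ((1 : ℝ≥0∞) ≤ 1) := ⟨le_rfl⟩

/-!
For a countable set `D`, the variation of `t ↦ c(t)(x)` over `D` is the increasing limit of the
variations over finite subsets of `D`, which are sums of distances `d(c(s)(x), c(t)(x))`; by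
monotone convergence its integral is `Var_{D₁}(c; D)`. For `D` the rationals of `[a,b]` this is
at most `Var_{D₁}(c; [a,b]) < ∞`, so for a.e. `x` the map `t ↦ c(t)(x)` has bounded variation on
`D`, hence one-sided limits along `D` since `N` is complete. The càdlàg version takes the right
limit along `D` at `t < b` and the left limit at `b`. Right-continuity of `c` and Fatou's lemma
identify `ĉ(t,·)` with `c(t)`, and right-continuity of the sections gives joint measurability.
Finally every value of `c`, or of `ĉ(·,x)`, at a point of `(s,t)` is a limit of values at points
of `D ∩ (s,t)` to its right, so both variations over `(s,t)` are attained on `D ∩ (s,t)`, where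
the integral formula above applies.
-/

section Variation

variable {ι E : Type*} [LinearOrder ι] [PseudoEMetricSpace E]

theorem eVariationOn_iUnion_of_directed {κ : Type*} (f : ι → E) {S : κ → Set ι}
    (hS : Directed (· ⊆ ·) S) :
    eVariationOn f (⋃ k, S k) = ⨆ k, eVariationOn f (S k) := by
  refine le_antisymm (iSup_le fun ⟨n, u, hu, hus⟩ => ?_)
    (iSup_le fun k => eVariationOn.mono f (subset_iUnion S k))
  classical
  choose k hk using fun i => mem_iUnion.1 (hus i)
  have : Nonempty κ := ⟨k 0⟩
  obtain ⟨z, hz⟩ := hS.finset_le ((Finset.range (n + 1)).image k)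
  refine le_iSup_of_le z (eVariationOn.sum_le_of_monotoneOn_Iic (hu.monotoneOn _) fun i hi => ?_)
  exact hz (k i) (Finset.mem_image_of_mem k (Finset.mem_range.2 (Nat.lt_succ_of_le hi))) (hk i)

theorem eVariationOn_insert_of_isGreatest (f : ι → E) {s : Set ι} {m x : ι}
    (hm : IsGreatest s m) (hmx : m ≤ x) :
    eVariationOn f (insert x s) = eVariationOn f s + edist (f m) (f x) := by
  rw [← eVariationOn.pair, ← eVariationOn.union f hm (by simp [IsLeast, lowerBounds, hmx])]
  congr 1
  ext y
  simp only [mem_insert_iff, mem_union]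
  constructor
  · rintro (rfl | hy) <;> simp_all
  · rintro (hy | rfl | rfl) <;> simp_all [hm.1]

theorem eVariationOn_le_of_mem_closure_graph [TopologicalSpace ι] [OrderClosedTopology ι]
    [FirstCountableTopology ι] {F G : ι → E} {A B : Set ι}
    (h : ∀ t ∈ A, (t, F t) ∈ closure ((fun q => (q, G q)) '' B)) :
    eVariationOn F A ≤ eVariationOn G B := by
  have hseq : ∀ t ∈ A, ∃ q : ℕ → ι, (∀ n, q n ∈ B) ∧ Tendsto q atTop (𝓝 t) ∧
      Tendsto (G ∘ q) atTop (𝓝 (F t)) := by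
    intro t ht
    obtain ⟨p, hpB, hp⟩ := mem_closure_iff_seq_limit.1 (h t ht)
    choose q hqB hq using hpB
    obtain rfl : p = fun n => (q n, G (q n)) := funext fun n => (hq n).symm
    exact ⟨q, hqB, (continuous_fst.tendsto _).comp hp, (continuous_snd.tendsto _).comp hp⟩
  -- One sequence per point of `A`, not per index: repeated points of a partition then stay equal
  -- and the approximating partitions are eventually monotone.
  choose! q hq using hseq
  refine iSup_le fun ⟨n, u, hu, huA⟩ => ?_
  have hsum : Tendsto
      (fun k => ∑ i ∈ Finset.range n, edist (G (q (u (i + 1)) k)) (G (q (u i) k))) atTop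
      (𝓝 (∑ i ∈ Finset.range n, edist (F (u (i + 1))) (F (u i)))) :=
    tendsto_finsetSum _ fun i _ => ((hq _ (huA _)).2.2).edist (hq _ (huA _)).2.2
  have hmono : ∀ᶠ k in atTop, ∀ i ∈ Finset.range n, q (u i) k ≤ q (u (i + 1)) k := by
    refine (eventually_all_finset _).2 fun i _ => ?_
    rcases (hu i.le_succ).lt_or_eq with hlt | heq
    · exact ((hq _ (huA _)).2.1.eventually_lt (hq _ (huA _)).2.1 hlt).mono fun _ => le_of_lt
    · simp [heq]
  refine le_of_tendsto hsum (hmono.mono fun k hk => eVariationOn.sum_le_of_monotoneOn_Iic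
    (u := fun i => q (u i) k) ?_ fun i _ => (hq _ (huA _)).1 k)
  refine monotoneOn_of_le_succ ordConnected_Iic fun i _ _ hi => hk i (Finset.mem_range.2 ?_)
  simpa [Order.succ_eq_add_one, Nat.add_one_le_iff] using hi

end Variation

section Integral

variable {ι E X : Type*} {μ : Measure α} [LinearOrder ι]
  [PseudoEMetricSpace E] [PseudoEMetricSpace X] {F : ι → α → E} {c : ι → X}

theorem lintegral_eVariationOn_finset (hF : ∀ p q, Measurable fun x => edist (F p x) (F q x))
    (hc : ∀ p q, edist (c p) (c q) = ∫⁻ x, edist (F p x) (F q x) ∂μ) (s : Finset ι) :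
    Measurable (fun x => eVariationOn (F · x) s) ∧
      ∫⁻ x, eVariationOn (F · x) s ∂μ = eVariationOn c s := by
  classical
  induction s using Finset.induction_on_max with
  | empty => simp
  | insert x s hlt ih =>
    rcases s.eq_empty_or_nonempty with rfl | hs
    · simp
    have hm : IsGreatest (s : Set ι) (s.max' hs) := ⟨s.max'_mem hs, fun y hy => s.le_max' y hy⟩
    have hmx : s.max' hs ≤ x := (hlt _ (s.max'_mem hs)).le
    simp only [Finset.coe_insert, eVariationOn_insert_of_isGreatest _ hm hmx]
    refine ⟨ih.1.add (hF _ _), ?_⟩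
    rw [lintegral_add_right _ (hF _ _), ih.2, hc]

theorem lintegral_eVariationOn_of_countable
    (hF : ∀ p q, Measurable fun x => edist (F p x) (F q x))
    (hc : ∀ p q, edist (c p) (c q) = ∫⁻ x, edist (F p x) (F q x) ∂μ) {s : Set ι}
    (hs : s.Countable) :
    Measurable (fun x => eVariationOn (F · x) s) ∧
      ∫⁻ x, eVariationOn (F · x) s ∂μ = eVariationOn c s := by
  classical
  rcases s.eq_empty_or_nonempty with rfl | hne
  · simp
  obtain ⟨e, rfl⟩ := hs.exists_eq_range hne
  set T : ℕ → Finset ι := fun n => (Finset.range n).image e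
  have hT : Monotone fun n => (T n : Set ι) := fun m n hmn =>
    Finset.coe_subset.2 (Finset.image_subset_image (Finset.range_mono hmn))
  have hrange : range e = ⋃ n, (T n : Set ι) := by
    ext y
    simp only [mem_range, mem_iUnion, Finset.coe_image, Finset.coe_range, mem_image, mem_Iio, T]
    exact ⟨fun ⟨i, hi⟩ => ⟨i + 1, i, i.lt_succ_self, hi⟩,
      fun ⟨_, i, _, hi⟩ => ⟨i, hi⟩⟩
  have hfin := fun n => lintegral_eVariationOn_finset hF hc (T n)
  simp only [hrange, eVariationOn_iUnion_of_directed _ hT.directed_le]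
  refine ⟨Measurable.iSup fun n => (hfin n).1, ?_⟩
  rw [lintegral_iSup (fun n => (hfin n).1) fun m n hmn x => eVariationOn.mono _ (hT hmn)]
  simp only [(hfin _).2]

end Integral

theorem tendsto_limits_of_tendsto {X Y κ : Type*} [TopologicalSpace Y] [RegularSpace Y]
    {g : X → Y} {F : Filter X} {Φ : κ → Filter X} {l : Filter κ} {L : κ → Y} {y : Y}
    (hF : Tendsto g F (𝓝 y)) (hΦ : ∀ S ∈ F, ∀ᶠ k in l, S ∈ Φ k)
    (hL : ∀ᶠ k in l, (Φ k).NeBot ∧ Tendsto g (Φ k) (𝓝 (L k))) :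
    Tendsto L l (𝓝 y) := by
  refine (closed_nhds_basis y).tendsto_right_iff.2 fun U ⟨hU, hUc⟩ => ?_
  filter_upwards [hΦ _ (hF hU), hL] with k hk ⟨hne, hk'⟩
  exact hUc.mem_of_tendsto hk' hk

theorem mem_closure_graph_of_tendsto {X Y : Type*} [TopologicalSpace X] [TopologicalSpace Y]
    {g : X → Y} {Φ : Filter X} [Φ.NeBot] {B : Set X} {t : X} {y : Y} (hΦ : Φ ≤ 𝓝[B] t)
    (hg : Tendsto g Φ (𝓝 y)) : (t, y) ∈ closure ((fun q => (q, g q)) '' B) :=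
  mem_closure_of_tendsto ((tendsto_id.mono_left (hΦ.trans nhdsWithin_le_nhds)).prodMk_nhds hg)
    (mem_of_superset (hΦ self_mem_nhdsWithin) fun _ hq => mem_image_of_mem _ hq)

theorem measurable_uncurry_of_continuousWithinAt_Ioi {β : Type*} [TopologicalSpace β]
    [PseudoMetrizableSpace β] [MeasurableSpace β] [BorelSpace β] {u : ℝ → α → β}
    (hu : ∀ x t, ContinuousWithinAt (u · x) (Ioi t) t) (hm : ∀ t, Measurable (u t)) :
    Measurable (Function.uncurry u) := by
  let T : ℕ → ℝ → ℝ := fun n t => (⌊t * (n + 1)⌋ + 1) / (n + 1)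
  have hT : ∀ n t, t < T n t ∧ T n t ≤ t + 1 / (n + 1) := by
    intro n t
    have hn : (0 : ℝ) < n + 1 := n.cast_add_one_pos
    constructor
    · rw [lt_div_iff₀ hn]; exact Int.lt_floor_add_one _
    · rw [div_le_iff₀ hn, add_mul, one_div_mul_cancel hn.ne']
      linarith [Int.floor_le (t * (n + 1))]
  have hTt : ∀ t, Tendsto (T · t) atTop (𝓝[>] t) := by
    intro t
    refine tendsto_nhdsWithin_iff.2 ⟨?_, Eventually.of_forall fun n => (hT n t).1⟩
    refine tendsto_of_tendsto_of_tendsto_of_le_of_le tendsto_const_nhds ?_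
      (fun n => (hT n t).1.le) fun n => (hT n t).2
    simpa only [add_zero] using
      (tendsto_const_nhds (x := t)).add (tendsto_one_div_add_atTop_nhds_zero_nat (𝕜 := ℝ))
  refine measurable_of_tendsto_metrizable (f := fun n p => u (T n p.1) p.2) (fun n => ?_)
    (tendsto_pi_nhds.2 fun p => ?_)
  · have hG : Measurable fun q : ℤ × α => u ((q.1 + 1) / (n + 1)) q.2 :=
      measurable_from_prod_countable_right fun z => hm ((z + 1) / (n + 1))
    have hf : Measurable fun p : ℝ × α => (⌊p.1 * (n + 1)⌋, p.2) :=
      (Int.measurable_floor.comp (measurable_fst.mul_const _)).prodMk measurable_snd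
    exact hG.comp hf
  · exact (hu p.2 p.1).tendsto.comp (hTt p.1)

namespace NLp

variable {μ : Measure α} {h : α → N} {hh : SM h}

theorem stronglyMeasurable (F : NLp μ h hh 1) : StronglyMeasurable F.1 :=
  stronglyMeasurable_iff_measurable_separable.2 F.2.1

theorem edist_eq_lintegral (F G : NLp μ h hh 1) :
    edist F G = ∫⁻ x, edist (F.1 x) (G.1 x) ∂μ := by
  rw [edist_def, Dp, eLpNorm_one_eq_lintegral_enorm]
  refine lintegral_congr fun x => ?_
  rw [edist_dist, Real.enorm_eq_ofReal dist_nonneg]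

theorem measurable_edist (F G : NLp μ h hh 1) : Measurable fun x => edist (F.1 x) (G.1 x) :=
  (continuous_edist.comp_stronglyMeasurable
    (F.stronglyMeasurable.prodMk G.stronglyMeasurable)).measurable

theorem ae_eq_of_tendsto {u : ℕ → NLp μ h hh 1} {F : NLp μ h hh 1} {g : α → N}
    (hu : Tendsto u atTop (𝓝 F))
    (hg : ∀ᵐ x ∂μ, Tendsto (fun n => (u n).1 x) atTop (𝓝 (g x))) : g =ᵐ[μ] F.1 := by
  have hgm : AEStronglyMeasurable g μ :=
    aestronglyMeasurable_of_tendsto_ae _ (fun n => (u n).stronglyMeasurable.aestronglyMeasurable) hg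
  have hdm : AEMeasurable (fun x => edist (g x) (F.1 x)) μ :=
    (continuous_edist.comp_aestronglyMeasurable
      (hgm.prodMk F.stronglyMeasurable.aestronglyMeasurable)).aemeasurable
  have hzero : ∫⁻ x, edist (g x) (F.1 x) ∂μ = 0 := by
    refine le_antisymm ?_ zero_le
    calc ∫⁻ x, edist (g x) (F.1 x) ∂μ
        = ∫⁻ x, liminf (fun n => edist ((u n).1 x) (F.1 x)) atTop ∂μ :=
          lintegral_congr_ae (hg.mono fun x hx => (hx.edist tendsto_const_nhds).liminf_eq.symm)
      _ ≤ liminf (fun n => ∫⁻ x, edist ((u n).1 x) (F.1 x) ∂μ) atTop :=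
          lintegral_liminf_le fun n => measurable_edist _ _
      _ = 0 := by
          simp_rw [← edist_eq_lintegral]
          exact (tendsto_iff_edist_tendsto_0.1 hu).liminf_eq
  filter_upwards [(lintegral_eq_zero_iff' hdm).1 hzero] with x hx
  exact edist_eq_zero.1 hx

theorem lintegral_eVariationOn (c : ℝ → NLp μ h hh 1) {s : Set ℝ} (hs : s.Countable) :
    Measurable (fun x => eVariationOn (fun t => (c t).1 x) s) ∧
      ∫⁻ x, eVariationOn (fun t => (c t).1 x) s ∂μ = eVariationOn c s :=
  lintegral_eVariationOn_of_countable (fun p q => measurable_edist (c p) (c q))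
    (fun p q => edist_eq_lintegral (c p) (c q)) hs

end NLp

def ratIcc (a b : ℝ) : Set ℝ := Icc a b ∩ range ((↑) : ℚ → ℝ)

theorem ratIcc_countable (a b : ℝ) : (ratIcc a b).Countable :=
  (countable_range _).mono inter_subset_right

theorem neBot_nhdsWithin_ratIcc_inter_Ioo {a b u v t : ℝ} (hau : a ≤ u) (huv : u < v)
    (hvb : v ≤ b) (ht : t ∈ Icc u v) : (𝓝[ratIcc a b ∩ Ioo u v] t).NeBot := by
  rw [← closure_Ioo huv.ne] at ht
  rw [← mem_closure_iff_nhdsWithin_neBot]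
  refine closure_mono ?_ (closure_minimal
    (Rat.denseRange_cast.open_subset_closure_inter isOpen_Ioo) isClosed_closure ht)
  rintro q ⟨hq, hqQ⟩
  exact ⟨⟨⟨hau.trans hq.1.le, hq.2.le.trans hvb⟩, hqQ⟩, hq⟩

def cadlagFilter (a b t : ℝ) : Filter ℝ :=
  if t < b then 𝓝[ratIcc a b ∩ Ioi t] t else 𝓝[ratIcc a b ∩ Iio b] b

section cadlagFilter

variable {a b t : ℝ}

theorem cadlagFilter_of_lt (ht : t < b) : cadlagFilter a b t = 𝓝[ratIcc a b ∩ Ioi t] t :=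
  if_pos ht

theorem cadlagFilter_of_le (ht : b ≤ t) : cadlagFilter a b t = 𝓝[ratIcc a b ∩ Iio b] b :=
  if_neg ht.not_gt

instance : (cadlagFilter a b t).IsCountablyGenerated := by
  unfold cadlagFilter
  split_ifs <;> infer_instance

theorem neBot_cadlagFilter (hab : a < b) (ht : t ∈ Icc a b) : (cadlagFilter a b t).NeBot := by
  rcases ht.2.lt_or_eq with htb | rfl
  · rw [cadlagFilter_of_lt htb]
    exact (neBot_nhdsWithin_ratIcc_inter_Ioo ht.1 htb le_rfl ⟨le_rfl, htb.le⟩).mono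
      (nhdsWithin_mono _ (inter_subset_inter_right _ Ioo_subset_Ioi_self))
  · rw [cadlagFilter_of_le le_rfl]
    exact (neBot_nhdsWithin_ratIcc_inter_Ioo le_rfl hab le_rfl ⟨hab.le, le_rfl⟩).mono
      (nhdsWithin_mono _ (inter_subset_inter_right _ Ioo_subset_Iio_self))

theorem cadlagFilter_le_nhdsWithin (ht : t ≤ b) : cadlagFilter a b t ≤ 𝓝[ratIcc a b] t := by
  rcases ht.lt_or_eq with htb | rfl
  · rw [cadlagFilter_of_lt htb]; exact nhdsWithin_mono _ inter_subset_left
  · rw [cadlagFilter_of_le le_rfl]; exact nhdsWithin_mono _ inter_subset_left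

end cadlagFilter

section Regularization

variable {Y : Type*} [PseudoEMetricSpace Y] {a b : ℝ} {g L : ℝ → Y}

theorem exists_tendsto_cadlagFilter [CompleteSpace Y] (hg : eVariationOn g (ratIcc a b) ≠ ∞)
    (t : ℝ) : ∃ y, Tendsto g (cadlagFilter a b t) (𝓝 y) := by
  unfold cadlagFilter
  split_ifs
  · exact BoundedVariationOn.exists_tendsto_right hg t
  · exact BoundedVariationOn.exists_tendsto_left hg b

def IsCadlagRegularization (a b : ℝ) (g L : ℝ → Y) : Prop :=
  ∀ t ∈ Icc a b, Tendsto g (cadlagFilter a b t) (𝓝 (L t))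

theorem isCadlagRegularization_self {c : ℝ → Y}
    (hrc : ∀ t ∈ Ico a b, Tendsto c (𝓝[Ioc t b] t) (𝓝 (c t)))
    (hlb : Tendsto c (𝓝[Ico a b] b) (𝓝 (c b))) : IsCadlagRegularization a b c c := by
  intro t ht
  rcases ht.2.lt_or_eq with htb | rfl
  · rw [cadlagFilter_of_lt htb]
    exact (hrc t ⟨ht.1, htb⟩).mono_left
      (nhdsWithin_mono _ fun q ⟨hq, htq⟩ => ⟨htq, hq.1.2⟩)
  · rw [cadlagFilter_of_le le_rfl]
    exact hlb.mono_left (nhdsWithin_mono _ fun q ⟨hq, hqt⟩ => ⟨hq.1.1, hqt⟩)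

namespace IsCadlagRegularization

theorem continuousWithinAt_Ici (hL : IsCadlagRegularization a b g L) (hab : a < b) {t : ℝ}
    (ht : t ∈ Icc a b) :
    ContinuousWithinAt L (Icc a b ∩ Ici t) t := by
  refine tendsto_limits_of_tendsto (hL t ht) (fun S hS => ?_)
    (eventually_nhdsWithin_of_forall fun r hr => ⟨neBot_cadlagFilter hab hr.1, hL r hr.1⟩)
  rcases ht.2.lt_or_eq with htb | rfl
  · rw [cadlagFilter_of_lt htb] at hS
    filter_upwards [nhdsWithin_le_nhds (eventually_nhds_nhdsWithin.2 hS),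
      nhdsWithin_le_nhds (Iio_mem_nhds htb), self_mem_nhdsWithin] with r hr hrb hrt
    rw [cadlagFilter_of_lt hrb]
    exact nhdsWithin_mono _ (inter_subset_inter_right _ (Ioi_subset_Ioi hrt.2)) hr
  · filter_upwards [self_mem_nhdsWithin] with r ⟨hr, htr⟩
    rwa [le_antisymm hr.2 htr]

theorem continuousWithinAt_Ioi_comp_clamp (hL : IsCadlagRegularization a b g L) (hab : a < b)
    (t : ℝ) :
    ContinuousWithinAt (fun r => L (max a (min r b))) (Ioi t) t := by
  have hmem : ∀ r, max a (min r b) ∈ Icc a b := fun r =>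
    ⟨le_max_left _ _, max_le hab.le (min_le_right _ _)⟩
  refine (hL.continuousWithinAt_Ici hab (hmem t)).comp (f := fun r => max a (min r b))
    (by fun_prop : Continuous _).continuousWithinAt fun r hr => ⟨hmem r, ?_⟩
  show max a (min t b) ≤ max a (min r b)
  gcongr
  exact le_of_lt hr

theorem tendsto_left (hL : IsCadlagRegularization a b g L) (hab : a < b) :
    Tendsto L (𝓝[Ico a b] b) (𝓝 (L b)) := by
  refine tendsto_limits_of_tendsto (hL b ⟨hab.le, le_rfl⟩) (fun S hS => ?_)
    (eventually_nhdsWithin_of_forall fun r hr =>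
      ⟨neBot_cadlagFilter hab (Ico_subset_Icc_self hr), hL r (Ico_subset_Icc_self hr)⟩)
  rw [cadlagFilter_of_le le_rfl] at hS
  filter_upwards [nhdsWithin_le_nhds (eventually_nhds_nhdsWithin.2 hS), self_mem_nhdsWithin]
    with r hr hrb
  rw [nhdsWithin_inter_of_mem' (mem_nhdsWithin_of_mem_nhds (Iio_mem_nhds hrb.2))] at hr
  rw [cadlagFilter_of_lt hrb.2]
  exact nhdsWithin_mono _ inter_subset_left hr

theorem eVariationOn_le (hL : IsCadlagRegularization a b g L) (hab : a < b) :
    eVariationOn L (Icc a b) ≤ eVariationOn g (ratIcc a b) :=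
  eVariationOn_le_of_mem_closure_graph fun t ht =>
    have := neBot_cadlagFilter hab ht
    mem_closure_graph_of_tendsto (cadlagFilter_le_nhdsWithin ht.2) (hL t ht)

theorem eVariationOn_Ioo_le (hL : IsCadlagRegularization a b g L) (hab : a < b) {s t : ℝ}
    (hs : a ≤ s) (ht : t ≤ b) :
    eVariationOn L (Ioo s t) ≤ eVariationOn g (ratIcc a b ∩ Ioo s t) := by
  refine eVariationOn_le_of_mem_closure_graph fun r hr => ?_
  have hr' : r ∈ Icc a b := ⟨hs.trans hr.1.le, hr.2.le.trans ht⟩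
  have := neBot_cadlagFilter hab hr'
  refine mem_closure_graph_of_tendsto ?_ (hL r hr')
  rw [cadlagFilter_of_lt (hr.2.trans_le ht),
    ← nhdsWithin_inter_of_mem' (mem_nhdsWithin_of_mem_nhds (Iio_mem_nhds hr.2))]
  exact nhdsWithin_mono _ fun q ⟨⟨hq, hrq⟩, hqt⟩ => ⟨hq, hr.1.trans hrq, hqt⟩

end IsCadlagRegularization

end Regularization

open Classical in
/-- Clamping `p.1` to `[a,b]` makes every section right-continuous on all of `ℝ`, as joint
measurability requires; `h p.2` supplies the point of `N` that `limUnder` needs. -/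
def cadlagVersion {μ : Measure α} {h : α → N} {hh : SM h} (c : ℝ → NLp μ h hh 1)
    (a b : ℝ) (p : ℝ × α) : N :=
  haveI : Nonempty N := ⟨h p.2⟩
  if eVariationOn (fun t => (c t).1 p.2) (ratIcc a b) = ∞ then h p.2
  else limUnder (cadlagFilter a b (max a (min p.1 b))) fun t => (c t).1 p.2

section CadlagVersion

variable {μ : Measure α} {h : α → N} {hh : SM h} (c : ℝ → NLp μ h hh 1) {a b : ℝ}

theorem cadlagVersion_of_eq_top {x : α}
    (hx : eVariationOn (fun t => (c t).1 x) (ratIcc a b) = ∞) (t : ℝ) :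
    cadlagVersion c a b (t, x) = h x := by
  simp only [cadlagVersion, hx, if_true]

theorem tendsto_cadlagVersion [CompleteSpace N] {x : α}
    (hx : eVariationOn (fun t => (c t).1 x) (ratIcc a b) ≠ ∞) (t : ℝ) :
    Tendsto (fun r => (c r).1 x) (cadlagFilter a b (max a (min t b)))
      (𝓝 (cadlagVersion c a b (t, x))) := by
  have : Nonempty N := ⟨h x⟩
  simp only [cadlagVersion, hx, if_false]
  exact tendsto_nhds_limUnder (exists_tendsto_cadlagFilter hx _)

theorem isCadlagRegularization_cadlagVersion [CompleteSpace N] {x : α}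
    (hx : eVariationOn (fun t => (c t).1 x) (ratIcc a b) ≠ ∞) :
    IsCadlagRegularization a b (fun r => (c r).1 x) (fun r => cadlagVersion c a b (r, x)) :=
  fun t ht => by
    simpa only [min_eq_left ht.2, max_eq_right ht.1] using tendsto_cadlagVersion c hx t

theorem cadlagVersion_clamp (hab : a ≤ b) (t : ℝ) (x : α) :
    cadlagVersion c a b (max a (min t b), x) = cadlagVersion c a b (t, x) := by
  have : max a (min (max a (min t b)) b) = max a (min t b) := by
    rw [min_eq_left (max_le hab (min_le_right _ _)), max_eq_right (le_max_left _ _)]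
  simp only [cadlagVersion, this]

theorem continuousWithinAt_cadlagVersion [CompleteSpace N] (hab : a < b) (x : α) (t : ℝ) :
    ContinuousWithinAt (fun r => cadlagVersion c a b (r, x)) (Ioi t) t := by
  by_cases hx : eVariationOn (fun t => (c t).1 x) (ratIcc a b) = ∞
  · simp only [cadlagVersion_of_eq_top c hx]
    exact continuousWithinAt_const
  · simpa only [cadlagVersion_clamp c hab.le] using
      (isCadlagRegularization_cadlagVersion c hx).continuousWithinAt_Ioi_comp_clamp hab t

theorem measurable_cadlagVersion_apply [CompleteSpace N] (hab : a < b) (t : ℝ) :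
    Measurable fun x => cadlagVersion c a b (t, x) := by
  set bad := {x | eVariationOn (fun t => (c t).1 x) (ratIcc a b) = ∞}
  have hbad : MeasurableSet bad :=
    (NLp.lintegral_eVariationOn c (ratIcc_countable a b)).1 (measurableSet_singleton ∞)
  have := neBot_cadlagFilter hab (t := max a (min t b))
    ⟨le_max_left _ _, max_le hab.le (min_le_right _ _)⟩
  refine measurable_of_tendsto_metrizable' (cadlagFilter a b (max a (min t b)))
    (f := fun r x => if x ∈ bad then h x else (c r).1 x)
    (fun r => Measurable.ite hbad hh.1 (c r).2.1.1) (tendsto_pi_nhds.2 fun x => ?_)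
  by_cases hx : x ∈ bad
  · simp only [if_pos hx, cadlagVersion_of_eq_top c hx]
    exact tendsto_const_nhds
  · simp only [if_neg hx]
    exact tendsto_cadlagVersion c hx t

theorem measurable_cadlagVersion [CompleteSpace N] (hab : a < b) :
    Measurable (cadlagVersion c a b) :=
  measurable_uncurry_of_continuousWithinAt_Ioi (u := fun t x => cadlagVersion c a b (t, x))
    (fun x t => continuousWithinAt_cadlagVersion c hab x t) (measurable_cadlagVersion_apply c hab)

theorem isSeparable_range_cadlagVersion [CompleteSpace N] (hab : a < b) :
    IsSeparable (range (cadlagVersion c a b)) := by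
  have := (ratIcc_countable a b).to_subtype
  refine ((hh.2.union (IsSeparable.iUnion fun q : ratIcc a b => (c q).2.1.2)).closure).mono ?_
  rintro _ ⟨⟨t, x⟩, rfl⟩
  by_cases hx : eVariationOn (fun t => (c t).1 x) (ratIcc a b) = ∞
  · rw [cadlagVersion_of_eq_top c hx]
    exact subset_closure (Or.inl (mem_range_self x))
  · have := neBot_cadlagFilter hab (t := max a (min t b))
      ⟨le_max_left _ _, max_le hab.le (min_le_right _ _)⟩
    refine mem_closure_of_tendsto (tendsto_cadlagVersion c hx t) ?_
    filter_upwards [cadlagFilter_le_nhdsWithin (max_le hab.le (min_le_right t b))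
      self_mem_nhdsWithin] with q hq
    exact Or.inr (mem_iUnion.2 ⟨⟨q, hq⟩, mem_range_self x⟩)

theorem ae_eVariationOn_ratIcc_ne_top (hbv : eVariationOn c (Icc a b) ≠ ∞) :
    ∀ᵐ x ∂μ, eVariationOn (fun t => (c t).1 x) (ratIcc a b) ≠ ∞ := by
  obtain ⟨hm, hint⟩ := NLp.lintegral_eVariationOn c (ratIcc_countable a b)
  refine (ae_lt_top hm ?_).mono fun x hx => hx.ne
  rw [hint]
  exact ne_top_of_le_ne_top hbv (eVariationOn.mono c inter_subset_left)

theorem cadlagVersion_ae_eq [CompleteSpace N] (hab : a < b)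
    (hrc : ∀ t ∈ Ico a b, Tendsto c (𝓝[Ioc t b] t) (𝓝 (c t)))
    (hlb : Tendsto c (𝓝[Ico a b] b) (𝓝 (c b))) (hbv : eVariationOn c (Icc a b) ≠ ∞)
    {t : ℝ} (ht : t ∈ Icc a b) : (fun x => cadlagVersion c a b (t, x)) =ᵐ[μ] (c t).1 := by
  have := neBot_cadlagFilter hab ht
  obtain ⟨q, hq⟩ := exists_seq_tendsto (cadlagFilter a b t)
  refine NLp.ae_eq_of_tendsto ((isCadlagRegularization_self hrc hlb t ht).comp hq) ?_
  filter_upwards [ae_eVariationOn_ratIcc_ne_top c hbv] with x hx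
  exact (isCadlagRegularization_cadlagVersion c hx t ht).comp hq

theorem ae_cadlag_cadlagVersion [CompleteSpace N] (hab : a < b)
    (hbv : eVariationOn c (Icc a b) ≠ ∞) :
    ∀ᵐ x ∂μ,
      (∀ t ∈ Ico a b, Tendsto (fun r => cadlagVersion c a b (r, x)) (𝓝[Ioc t b] t)
        (𝓝 (cadlagVersion c a b (t, x)))) ∧
      (∀ t ∈ Ioc a b,
        ∃ L, Tendsto (fun r => cadlagVersion c a b (r, x)) (𝓝[Ico a t] t) (𝓝 L)) ∧
      Tendsto (fun r => cadlagVersion c a b (r, x)) (𝓝[Ico a b] b)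
        (𝓝 (cadlagVersion c a b (b, x))) ∧
      eVariationOn (fun r => cadlagVersion c a b (r, x)) (Icc a b) ≠ ∞ := by
  filter_upwards [ae_eVariationOn_ratIcc_ne_top c hbv] with x hx
  have hL := isCadlagRegularization_cadlagVersion c hx
  have hvar := ne_top_of_le_ne_top hx (hL.eVariationOn_le hab)
  refine ⟨fun t _ => (continuousWithinAt_cadlagVersion c hab x t).mono Ioc_subset_Ioi_self,
    fun t ht => ?_, hL.tendsto_left hab, hvar⟩
  obtain ⟨y, hy⟩ := BoundedVariationOn.exists_tendsto_left hvar t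
  exact ⟨y, hy.mono_left
    (nhdsWithin_mono _ fun r hr => ⟨⟨hr.1, hr.2.le.trans ht.2⟩, hr.2⟩)⟩

theorem eVariationOn_Ioo_eq_lintegral_cadlagVersion [CompleteSpace N] (hab : a < b)
    (hrc : ∀ t ∈ Ico a b, Tendsto c (𝓝[Ioc t b] t) (𝓝 (c t)))
    (hlb : Tendsto c (𝓝[Ico a b] b) (𝓝 (c b))) (hbv : eVariationOn c (Icc a b) ≠ ∞)
    {s t : ℝ} (hs : a ≤ s) (ht : t ≤ b) :
    eVariationOn c (Ioo s t) =
      ∫⁻ x, eVariationOn (fun r => cadlagVersion c a b (r, x)) (Ioo s t) ∂μ := by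
  have hc : eVariationOn c (Ioo s t) = eVariationOn c (ratIcc a b ∩ Ioo s t) :=
    le_antisymm ((isCadlagRegularization_self hrc hlb).eVariationOn_Ioo_le hab hs ht)
      (eVariationOn.mono c inter_subset_right)
  have hD : ∀ᵐ x ∂μ, ∀ q ∈ ratIcc a b, cadlagVersion c a b (q, x) = (c q).1 x :=
    (ae_ball_iff (ratIcc_countable a b)).2 fun q hq =>
      cadlagVersion_ae_eq c hab hrc hlb hbv hq.1
  rw [hc, ← (NLp.lintegral_eVariationOn c ((ratIcc_countable a b).mono inter_subset_left)).2]
  refine lintegral_congr_ae ?_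
  filter_upwards [ae_eVariationOn_ratIcc_ne_top c hbv, hD] with x hx hxD
  refine le_antisymm ?_
    ((isCadlagRegularization_cadlagVersion c hx).eVariationOn_Ioo_le hab hs ht)
  rw [eVariationOn.eq_of_eqOn fun q hq => (hxD q hq.1).symm]
  exact eVariationOn.mono _ inter_subset_right

end CadlagVersion

theorem stmt12_general {α : Type*} [MeasurableSpace α] {N : Type*} [MetricSpace N]
    [MeasurableSpace N] [BorelSpace N] [CompleteSpace N]
    (μ : Measure α) (h : α → N) (hh : SM h) (a b : ℝ) (hab : a < b)
    (c : ℝ → NLp μ h hh 1)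
    (hrc : ∀ t ∈ Set.Ico a b, Tendsto c (𝓝[Set.Ioc t b] t) (𝓝 (c t)))
    (hlb : Tendsto c (𝓝[Set.Ico a b] b) (𝓝 (c b)))
    (hbv : eVariationOn c (Set.Icc a b) ≠ ∞) :
    ∃ cHat : ℝ × α → N, Measurable cHat ∧ TopologicalSpace.IsSeparable (Set.range cHat) ∧
      (∀ t ∈ Set.Icc a b, (fun x => cHat (t, x)) =ᵐ[μ] (c t).1) ∧
      (∀ᵐ x ∂μ,
        (∀ t ∈ Set.Ico a b,
          Tendsto (fun r => cHat (r, x)) (𝓝[Set.Ioc t b] t) (𝓝 (cHat (t, x)))) ∧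
        (∀ t ∈ Set.Ioc a b, ∃ L, Tendsto (fun r => cHat (r, x)) (𝓝[Set.Ico a t] t) (𝓝 L)) ∧
        Tendsto (fun r => cHat (r, x)) (𝓝[Set.Ico a b] b) (𝓝 (cHat (b, x))) ∧
        eVariationOn (fun r => cHat (r, x)) (Set.Icc a b) ≠ ∞) ∧
      (∀ s t : ℝ, a ≤ s → s < t → t ≤ b →
        eVariationOn c (Set.Ioo s t)
          = ∫⁻ x, eVariationOn (fun r => cHat (r, x)) (Set.Ioo s t) ∂μ) :=
  ⟨cadlagVersion c a b, measurable_cadlagVersion c hab, isSeparable_range_cadlagVersion c hab,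
    fun _ ht => cadlagVersion_ae_eq c hab hrc hlb hbv ht, ae_cadlag_cadlagVersion c hab hbv,
    fun _ _ hs _ ht => eVariationOn_Ioo_eq_lintegral_cadlagVersion c hab hrc hlb hbv hs ht⟩

/-- Any curve `c : [a,b] → L^1_h(M,N)` (`N` complete) which is càdlàg (right continuous with
left limits on `[a,b)`, left-continuous at `b`) and of bounded variation with respect to
`D_1` admits a jointly Borel measurable, separably valued `cHat : [a,b] × M → N` such that:
(a) for every `t ∈ [a,b]`, `x ↦ cHat(t,x)` represents `c t`; (b) for `μ`-a.e. `x`, the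
section `t ↦ cHat(t,x)` is càdlàg of bounded variation; (c) for all `a ≤ s < t ≤ b`,
`Var_{D_1}(c;(s,t)) = ∫_M Var_N(cHat(·,x);(s,t)) dμ(x)`. -/
theorem stmt12 {α : Type*} [MeasurableSpace α] {N : Type*} [MetricSpace N]
    [MeasurableSpace N] [BorelSpace N] [CompleteSpace N]
    (μ : Measure α) (h : α → N) (hh : SM h) (a b : ℝ) (hab : a < b)
    (c : ℝ → NLp μ h hh 1)
    (hrc : ∀ t ∈ Set.Ico a b, Tendsto c (𝓝[Set.Ioc t b] t) (𝓝 (c t)))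
    (hll : ∀ t ∈ Set.Ioc a b, ∃ L, Tendsto c (𝓝[Set.Ico a t] t) (𝓝 L))
    (hlb : Tendsto c (𝓝[Set.Ico a b] b) (𝓝 (c b)))
    (hbv : eVariationOn c (Set.Icc a b) ≠ ∞) :
    ∃ cHat : ℝ × α → N, Measurable cHat ∧ TopologicalSpace.IsSeparable (Set.range cHat) ∧
      (∀ t ∈ Set.Icc a b, (fun x => cHat (t, x)) =ᵐ[μ] (c t).1) ∧
      (∀ᵐ x ∂μ,
        (∀ t ∈ Set.Ico a b,
          Tendsto (fun r => cHat (r, x)) (𝓝[Set.Ioc t b] t) (𝓝 (cHat (t, x)))) ∧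
        (∀ t ∈ Set.Ioc a b, ∃ L, Tendsto (fun r => cHat (r, x)) (𝓝[Set.Ico a t] t) (𝓝 L)) ∧
        Tendsto (fun r => cHat (r, x)) (𝓝[Set.Ico a b] b) (𝓝 (cHat (b, x))) ∧
        eVariationOn (fun r => cHat (r, x)) (Set.Icc a b) ≠ ∞) ∧
      (∀ s t : ℝ, a ≤ s → s < t → t ≤ b →
        eVariationOn c (Set.Ioo s t)
          = ∫⁻ x, eVariationOn (fun r => cHat (r, x)) (Set.Ioo s t) ∂μ) :=
  stmt12_general μ h hh a b hab c hrc hlb hbv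

end NLS
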